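/- arXiv:1807.06955 — 2 statements merged into one kernel-verified Lean document; each statement's English description precedes it below -/
import Mathlib

section
/- Let T_1 : M_k(ℂ) → M_k(ℂ) be a completely positive map and let V_1 be the block-diagonal orthogonal projection with blocks Id_{s×s} and 0_{(k−s)×(k−s)}, such that T_1(V_1M_kV_1) ⊆ V_1M_kV_1, T_1|_{V_1M_kV_1} is irreducible, and V_1 T_1*(V_1) V_1 = V_1. Define f : M_{(k−s)×s}(ℂ) → ℝ_{≥0} by f(X) = tr( T_1*( [[Id, X*],[X, XX*]] ) · [[X*X, −X*],[−X, Id]] ), using 2×2 block matrices with blocks of sizes s and k−s. Then the following are equivalent: (a) W is a solution to Problem 1 for (T_1, V_1); (b) W is the orthogonal projection onto the column space of the k×s block matrix [Id_{s×s}; S] for some S ∈ M_{(k−s)×s}(ℂ) with f(S) = 0. -/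
open scoped Kronecker ComplexOrder
open Matrix

noncomputable section

/-- `V` is an orthogonal projection. -/
def IsOrthProj {n : Type*} [Fintype n] (V : Matrix n n ℂ) : Prop :=
  V.IsHermitian ∧ V * V = V

/-- The corner algebra `V M V` is left invariant by `T`. -/
def LeavesInv {n : Type*} [Fintype n] (T : Matrix n n ℂ → Matrix n n ℂ)
    (V : Matrix n n ℂ) : Prop :=
  ∀ X, T (V * X * V) = V * T (V * X * V) * V

/-- `T` sends positive semidefinite matrices to positive semidefinite matrices. -/
def IsPosMap {n p : Type*} [Fintype n] [Fintype p]
    (T : Matrix n n ℂ → Matrix p p ℂ) : Prop :=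
  ∀ X, X.PosSemidef → (T X).PosSemidef

/-- `T` is completely positive, i.e. it has a Kraus decomposition. -/
def IsCPMap {n : Type*} [Fintype n] (T : Matrix n n ℂ → Matrix n n ℂ) : Prop :=
  ∃ (r : ℕ) (A : Fin r → Matrix n n ℂ), ∀ X, T X = ∑ i, A i * X * (A i)ᴴ

/-- The restriction of `T` to the corner algebra of `V` is irreducible. -/
def IsIrredOn {n : Type*} [Fintype n] [DecidableEq n]
    (T : Matrix n n ℂ → Matrix n n ℂ) (V : Matrix n n ℂ) : Prop :=
  ∀ V' : Matrix n n ℂ, IsOrthProj V' →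
    LinearMap.range V'.mulVecLin ≤ LinearMap.range V.mulVecLin →
    LeavesInv T V' → V' = V ∨ V' = 0

/-- `l` is the spectral radius of the restriction of `T` to the corner of `V`. -/
def HasSpecRadOn {n : Type*} [Fintype n] (T : Matrix n n ℂ → Matrix n n ℂ)
    (V : Matrix n n ℂ) (l : ℝ) : Prop :=
  (∃ (μ : ℂ) (X : Matrix n n ℂ), X ≠ 0 ∧ V * X * V = X ∧ T X = μ • X ∧ ‖μ‖ = l) ∧
  ∀ (μ : ℂ) (X : Matrix n n ℂ), X ≠ 0 → V * X * V = X → T X = μ • X → ‖μ‖ ≤ l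

/-- `G_A(X)`: the partial trace over the first factor of `(X ⊗ 1) A`; for
`A = Σ Aᵢ ⊗ Bᵢ` this is `Σ tr(Aᵢ X) Bᵢ`. -/
def Gmap {n p : Type*} [Fintype n] [Fintype p]
    (A : Matrix (n × p) (n × p) ℂ) (X : Matrix n n ℂ) : Matrix p p ℂ :=
  Matrix.of fun j j' => ∑ i, ∑ l, X i l * A (l, j) (i, j')

/-- Partial transposition on the second tensor factor. -/
def ptr {n p : Type*} (A : Matrix (n × p) (n × p) ℂ) : Matrix (n × p) (n × p) ℂ :=
  Matrix.of fun q r => A (q.1, r.2) (r.1, q.2)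

/-- `A` is positive under partial transposition. -/
def IsPPT {n p : Type*} [Fintype n] [Fintype p]
    (A : Matrix (n × p) (n × p) ℂ) : Prop :=
  A.PosSemidef ∧ (ptr A).PosSemidef

/-- Doubly stochastic positive map: `T(Id/√k) = Id/√m` and `T^*(Id/√m) = Id/√k`,
the latter expressed via the trace characterization of the adjoint. -/
def IsDoublyStochastic {n p : Type*} [Fintype n] [Fintype p] [DecidableEq n] [DecidableEq p]
    (T : Matrix n n ℂ → Matrix p p ℂ) : Prop :=
  IsPosMap T ∧
  T ((Real.sqrt (Fintype.card n) : ℂ)⁻¹ • 1) = (Real.sqrt (Fintype.card p) : ℂ)⁻¹ • 1 ∧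
  ∀ X : Matrix n n ℂ,
    (Real.sqrt (Fintype.card p) : ℂ)⁻¹ * (T X).trace
      = (Real.sqrt (Fintype.card n) : ℂ)⁻¹ * X.trace

/-- `T` is equivalent to a doubly stochastic map. -/
def EquivDS {n p : Type*} [Fintype n] [Fintype p] [DecidableEq n] [DecidableEq p]
    (T : Matrix n n ℂ → Matrix p p ℂ) : Prop :=
  ∃ (R : Matrix n n ℂ) (S : Matrix p p ℂ), IsUnit R ∧ IsUnit S ∧
    IsDoublyStochastic fun X => S * T (R * X * Rᴴ) * Sᴴ

/-- `W` is a solution of Problem 1 subjected to a map with adjoint `Tstar` and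
the orthogonal projection `V`. -/
def IsSolutionW {n : Type*} [Fintype n] [DecidableEq n]
    (Tstar : Matrix n n ℂ → Matrix n n ℂ) (V W : Matrix n n ℂ) : Prop :=
  IsOrthProj W ∧ LeavesInv Tstar W ∧ IsIrredOn Tstar W ∧
    W.rank = V.rank ∧
    LinearMap.ker W.mulVecLin ⊓ LinearMap.range V.mulVecLin = ⊥

/-- The property appearing in item 3 of the main theorem: for every invariant
irreducible corner `V` with spectral radius `l` there is a unique solution `W`
of Problem 1 with spectral radius `l`. -/
def UniqueWProp {n : Type*} [Fintype n] [DecidableEq n]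
    (T Tstar : Matrix n n ℂ → Matrix n n ℂ) : Prop :=
  ∀ (V : Matrix n n ℂ) (l : ℝ), IsOrthProj V → LeavesInv T V → IsIrredOn T V →
    HasSpecRadOn T V l →
    ∃! W : Matrix n n ℂ, IsOrthProj W ∧ LeavesInv Tstar W ∧ IsIrredOn Tstar W ∧
      HasSpecRadOn Tstar W l ∧ W.rank = V.rank ∧
      LinearMap.ker W.mulVecLin ⊓ LinearMap.range V.mulVecLin = ⊥

/-- `ℂ^n` is the (not necessarily orthogonal) direct sum of the images of the `V i`. -/
def IsDirectSumDecomp {n : Type*} [Fintype n] {s : ℕ}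
    (V : Fin s → Matrix n n ℂ) : Prop :=
  (⨆ i, LinearMap.range (V i).mulVecLin) = ⊤ ∧
    iSupIndep fun i => LinearMap.range (V i).mulVecLin


/-- The quadratic function `f` of Lemma 11, with `T₁^*` given explicitly:
`f(X) = tr( T₁^*([[Id, X^*],[X, XX^*]]) · [[X^*X, −X^*],[−X, Id]] )`. -/
def fFun {s t : ℕ}
    (T1star : Matrix (Fin s ⊕ Fin t) (Fin s ⊕ Fin t) ℂ →
      Matrix (Fin s ⊕ Fin t) (Fin s ⊕ Fin t) ℂ)
    (X : Matrix (Fin t) (Fin s) ℂ) : ℂ :=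
  (T1star (Matrix.fromBlocks 1 Xᴴ X (X * Xᴴ)) *
    Matrix.fromBlocks (Xᴴ * X) (-Xᴴ) (-X) 1).trace

/-- The `k × s` block matrix `[Id_{s×s}; S]`. -/
def stacked {s t : ℕ} (S : Matrix (Fin t) (Fin s) ℂ) :
    Matrix (Fin s ⊕ Fin t) (Fin s) ℂ :=
  Matrix.of fun i j => Sum.elim (fun a => if a = j then (1 : ℂ) else 0) (fun b => S b j) i

/-!
Write `T₁ X = ∑ Aᵢ X Aᵢᴴ`; then `T₁^* Y = ∑ Aᵢᴴ Y Aᵢ`. For an orthogonal projection `U`,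
`T₁` leaves the corner of `U` invariant iff `range U` is invariant under every `Aᵢ`, and `T₁^*`
leaves it invariant iff `ker U` is. If `range W` is the column space of `M = [Id; S]`, then
`ker W = ker Mᴴ` is the column space of `N = [-Sᴴ; Id]` and `f(S) = ∑ ‖Mᴴ Aᵢ N‖²` (Frobenius
norm), so `f(S) = 0` says exactly that `ker W` is invariant.

The rank and kernel conditions of Problem 1 say that `ker W` is a complement of `range V₁`;
hence `range W` meets `(range V₁)ᗮ` trivially and is the graph of a linear map, i.e. the column
space of some `[Id; S]`. Irreducibility of `T₁^*` on `W` is automatic: for an invariant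
`W' ≤ W`, the subspace `ker W' ⊓ range V₁` is invariant under the `Aᵢ`, so by irreducibility of
`T₁` on `V₁` it is either `0`, and then `W' = W` by counting dimensions, or `range V₁`, and
then `ker W' ⊇ ker W ⊔ range V₁ = ⊤`.
-/

section MatrixFacts

variable {m n p : Type*} [Fintype m] [Fintype n] [Fintype p]

theorem sum_trace_mul_conjTranspose_self_eq_zero_iff {ι : Type*} [Fintype ι]
    {C : ι → Matrix m p ℂ} : ∑ i, (C i * (C i)ᴴ).trace = 0 ↔ ∀ i, C i = 0 := by
  rw [Finset.sum_eq_zero_iff_of_nonneg fun i _ =>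
    (posSemidef_self_mul_conjTranspose (C i)).trace_nonneg]
  simp only [Finset.mem_univ, true_implies, trace_mul_conjTranspose_self_eq_zero_iff]

theorem eq_of_forall_trace_mul_conjTranspose_eq {A B : Matrix m n ℂ}
    (h : ∀ X : Matrix m n ℂ, (X * Aᴴ).trace = (X * Bᴴ).trace) : A = B := by
  have hAB : ((A - B) * (A - B)ᴴ).trace = 0 := by
    rw [conjTranspose_sub, Matrix.mul_sub, trace_sub, h, sub_self]
  rwa [trace_mul_conjTranspose_self_eq_zero_iff, sub_eq_zero] at hAB

theorem mulVec_conjTranspose_eq_zero_iff (M : Matrix m n ℂ) (x : m → ℂ) :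
    Mᴴ *ᵥ x = 0 ↔ ∀ y ∈ LinearMap.range M.mulVecLin, star y ⬝ᵥ x = 0 := by
  have key (z : n → ℂ) : star z ⬝ᵥ (Mᴴ *ᵥ x) = star (M *ᵥ z) ⬝ᵥ x := by
    rw [dotProduct_mulVec, star_mulVec]
  refine ⟨?_, fun h => ?_⟩
  · rintro hx _ ⟨z, rfl⟩
    rw [mulVecLin_apply, ← key, hx, dotProduct_zero]
  · rw [← dotProduct_star_self_eq_zero, key]
    exact h _ ⟨_, rfl⟩

theorem range_mem_invtSubmodule_iff {U B : Matrix n n ℂ} (hU : U * U = U) :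
    LinearMap.range U.mulVecLin ∈ Module.End.invtSubmodule B.mulVecLin ↔
      U * B * U = B * U := by
  rw [Module.End.mem_invtSubmodule_iff_forall_mem_of_mem, ext_iff_mulVec]
  refine ⟨fun h x => ?_, fun h => ?_⟩
  · obtain ⟨y, hy⟩ := h _ ⟨x, rfl⟩
    simp only [mulVecLin_apply] at hy
    simp only [← mulVec_mulVec]
    rw [← hy, mulVec_mulVec, hU]
  · rintro _ ⟨y, rfl⟩
    exact ⟨(B * U) *ᵥ y, by simp only [mulVecLin_apply, mulVec_mulVec, ← Matrix.mul_assoc, h]⟩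

theorem ker_mem_invtSubmodule_iff {U B : Matrix n n ℂ} (hU : U * U = U) :
    LinearMap.ker U.mulVecLin ∈ Module.End.invtSubmodule B.mulVecLin ↔
      U * B * U = U * B := by
  rw [Module.End.mem_invtSubmodule_iff_forall_mem_of_mem, ext_iff_mulVec]
  simp only [LinearMap.mem_ker, mulVecLin_apply]
  refine ⟨fun h x => ?_, fun h x hx => ?_⟩
  · have hx : U *ᵥ (x - U *ᵥ x) = 0 := by
      rw [mulVec_sub, mulVec_mulVec, hU, sub_self]
    have := h _ hx
    rw [mulVec_sub, mulVec_sub, sub_eq_zero] at this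
    simp only [← mulVec_mulVec]
    exact this.symm
  · rw [mulVec_mulVec, ← h, ← mulVec_mulVec, hx, mulVec_zero]

omit [Fintype m] in
theorem ker_mem_invtSubmodule_iff_mul_eq_zero {N : Matrix m n ℂ} {U : Matrix n p ℂ}
    (h : LinearMap.ker N.mulVecLin = LinearMap.range U.mulVecLin) (B : Matrix n n ℂ) :
    LinearMap.ker N.mulVecLin ∈ Module.End.invtSubmodule B.mulVecLin ↔ N * B * U = 0 := by
  rw [Module.End.mem_invtSubmodule_iff_map_le]
  nth_rw 1 [h]
  rw [← LinearMap.range_comp, LinearMap.range_le_ker_iff, ← mulVecLin_mul, ← mulVecLin_mul,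
    ← Matrix.mul_assoc, LinearMap.ext_iff, ext_iff_mulVec]
  simp only [mulVecLin_apply, LinearMap.zero_apply, zero_mulVec]

end MatrixFacts

namespace IsOrthProj

variable {n m : Type*} [Fintype n] [Fintype m]

theorem mem_ker_iff {W : Matrix n n ℂ} (hW : IsOrthProj W) (x : n → ℂ) :
    x ∈ LinearMap.ker W.mulVecLin ↔ ∀ y ∈ LinearMap.range W.mulVecLin, star y ⬝ᵥ x = 0 := by
  rw [LinearMap.mem_ker, mulVecLin_apply, ← mulVec_conjTranspose_eq_zero_iff, hW.1.eq]

theorem ker_eq_ker_conjTranspose {W : Matrix n n ℂ} (hW : IsOrthProj W) {M : Matrix n m ℂ}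
    (h : LinearMap.range W.mulVecLin = LinearMap.range M.mulVecLin) :
    LinearMap.ker W.mulVecLin = LinearMap.ker Mᴴ.mulVecLin := by
  ext x
  rw [hW.mem_ker_iff, h, LinearMap.mem_ker, mulVecLin_apply, mulVec_conjTranspose_eq_zero_iff]

theorem ker_le_ker_of_range_le {P Q : Matrix n n ℂ} (hP : IsOrthProj P) (hQ : IsOrthProj Q)
    (h : LinearMap.range Q.mulVecLin ≤ LinearMap.range P.mulVecLin) :
    LinearMap.ker P.mulVecLin ≤ LinearMap.ker Q.mulVecLin := fun x hx =>
  (hQ.mem_ker_iff x).mpr fun y hy => (hP.mem_ker_iff x).mp hx y (h hy)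

theorem mul_eq_of_ker_le {P Q : Matrix n n ℂ} (hQ : IsOrthProj Q)
    (h : LinearMap.ker Q.mulVecLin ≤ LinearMap.ker P.mulVecLin) : P * Q = P := by
  rw [ext_iff_mulVec]
  intro x
  have hx : x - Q *ᵥ x ∈ LinearMap.ker Q.mulVecLin := by
    rw [LinearMap.mem_ker, mulVecLin_apply, mulVec_sub, mulVec_mulVec, hQ.2, sub_self]
  have := LinearMap.mem_ker.mp (h hx)
  rwa [mulVecLin_apply, mulVec_sub, sub_eq_zero, eq_comm, mulVec_mulVec] at this

theorem eq_of_ker_eq {P Q : Matrix n n ℂ} (hP : IsOrthProj P) (hQ : IsOrthProj Q)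
    (h : LinearMap.ker P.mulVecLin = LinearMap.ker Q.mulVecLin) : P = Q := by
  have hPQ : P * Q = P := mul_eq_of_ker_le hQ h.ge
  have hQP : Q * P = Q := mul_eq_of_ker_le hP h.le
  calc P = (P * Q)ᴴ := by rw [hPQ, hP.1.eq]
    _ = Q := by rw [conjTranspose_mul, hP.1.eq, hQ.1.eq, hQP]

end IsOrthProj

theorem exists_isOrthProj_range_eq {n : Type*} [Fintype n] [DecidableEq n]
    (K : Submodule ℂ (n → ℂ)) :
    ∃ P : Matrix n n ℂ, IsOrthProj P ∧ LinearMap.range P.mulVecLin = K := by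
  let K' := K.comap (WithLp.linearEquiv 2 ℂ (n → ℂ)).toLinearMap
  let P : Matrix n n ℂ := toEuclideanLin.symm K'.starProjection.toLinearMap
  have hP : toEuclideanLin P = K'.starProjection.toLinearMap := by simp [P]
  have hPx (x : n → ℂ) : P *ᵥ x = WithLp.ofLp (K'.starProjection (WithLp.toLp 2 x)) :=
    congrArg WithLp.ofLp (LinearMap.congr_fun hP (WithLp.toLp 2 x))
  refine ⟨P, ⟨?_, ?_⟩, ?_⟩
  · rw [← isSymmetric_toEuclideanLin_iff, hP]
    exact K'.starProjection_isSymmetric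
  · apply toEuclideanLin.injective
    rw [toLpLin_mul_same, hP]
    exact congrArg ContinuousLinearMap.toLinearMap K'.isIdempotentElem_starProjection
  · ext x
    simp only [LinearMap.mem_range, mulVecLin_apply, hPx]
    constructor
    · rintro ⟨y, rfl⟩
      exact K'.starProjection_apply_mem _
    · exact fun hxK => ⟨x, by rw [K'.starProjection_eq_self_iff.mpr hxK]⟩

section Kraus

variable {n ι : Type*} [Fintype n] [DecidableEq n] [Fintype ι] {A : ι → Matrix n n ℂ}
  {T Tstar : Matrix n n ℂ → Matrix n n ℂ}

omit [DecidableEq n] in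
theorem kraus_adjoint_eq (hT : ∀ X, T X = ∑ i, A i * X * (A i)ᴴ)
    (hadj : ∀ X Y, (T X * Yᴴ).trace = (X * (Tstar Y)ᴴ).trace) (Y : Matrix n n ℂ) :
    Tstar Y = ∑ i, (A i)ᴴ * Y * A i := by
  refine eq_of_forall_trace_mul_conjTranspose_eq fun X => ?_
  rw [← hadj, hT, conjTranspose_sum, Finset.sum_mul, Finset.mul_sum, trace_sum, trace_sum]
  refine Finset.sum_congr rfl fun i _ => ?_
  simp only [conjTranspose_mul, conjTranspose_conjTranspose, Matrix.mul_assoc]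
  rw [trace_mul_comm]
  simp only [Matrix.mul_assoc]

theorem leavesInv_iff_forall_mul_eq (hT : ∀ X, T X = ∑ i, A i * X * (A i)ᴴ)
    {U : Matrix n n ℂ} (hU : IsOrthProj U) :
    LeavesInv T U ↔ ∀ i, U * A i * U = A i * U := by
  have hUH : Uᴴ = U := hU.1.eq
  have compress (B X : Matrix n n ℂ) : B * (U * X * U) * Bᴴ = (B * U) * X * (B * U)ᴴ := by
    simp only [conjTranspose_mul, hUH, Matrix.mul_assoc]
  refine ⟨fun h i => ?_, fun h X => ?_⟩
  · have hTU : T U = U * T U * U := by simpa only [Matrix.mul_one, hU.2] using h 1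
    -- `D T(U) D = 0` for `D = 1 - U`, and it is the sum of the positive terms `(D Aᵢ U)(D Aᵢ U)ᴴ`
    set D := 1 - U with hD
    have hDU : D * U = 0 := by rw [hD, Matrix.sub_mul, Matrix.one_mul, hU.2, sub_self]
    have hDH : Dᴴ = D := by rw [hD, conjTranspose_sub, conjTranspose_one, hUH]
    have hsum : ∑ j, ((D * (A j * U)) * (D * (A j * U))ᴴ).trace = 0 := by
      have hDTD : D * T U * D = 0 := by
        rw [hTU, ← Matrix.mul_assoc, ← Matrix.mul_assoc, hDU]
        simp only [Matrix.zero_mul]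
      rw [← trace_zero n ℂ, ← hDTD, hT, Finset.mul_sum, Finset.sum_mul, trace_sum]
      refine Finset.sum_congr rfl fun j _ => ?_
      have hUU (Y : Matrix n n ℂ) : U * (U * Y) = U * Y := by rw [← Matrix.mul_assoc, hU.2]
      simp only [conjTranspose_mul, hDH, hUH, Matrix.mul_assoc, hUU]
    have hDAU := sum_trace_mul_conjTranspose_self_eq_zero_iff.mp hsum i
    rw [hD, Matrix.sub_mul, Matrix.one_mul, sub_eq_zero] at hDAU
    rw [Matrix.mul_assoc, hDAU.symm]
  · rw [hT, Finset.mul_sum, Finset.sum_mul]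
    refine Finset.sum_congr rfl fun i _ => ?_
    have hB : U * (A i * U) = A i * U := by rw [← Matrix.mul_assoc, h i]
    calc A i * (U * X * U) * (A i)ᴴ
        = (U * (A i * U)) * X * (U * (A i * U))ᴴ := by rw [hB, compress]
      _ = U * (A i * (U * X * U) * (A i)ᴴ) * U := by
          rw [compress]; simp only [conjTranspose_mul, hUH, Matrix.mul_assoc]

theorem leavesInv_iff_range_mem_invtSubmodule (hT : ∀ X, T X = ∑ i, A i * X * (A i)ᴴ)
    {U : Matrix n n ℂ} (hU : IsOrthProj U) :
    LeavesInv T U ↔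
      ∀ i, LinearMap.range U.mulVecLin ∈ Module.End.invtSubmodule (A i).mulVecLin := by
  simp only [leavesInv_iff_forall_mul_eq hT hU, range_mem_invtSubmodule_iff hU.2]

theorem leavesInv_adjoint_iff_ker_mem_invtSubmodule
    (hTstar : ∀ Y, Tstar Y = ∑ i, (A i)ᴴ * Y * A i) {W : Matrix n n ℂ} (hW : IsOrthProj W) :
    LeavesInv Tstar W ↔
      ∀ i, LinearMap.ker W.mulVecLin ∈ Module.End.invtSubmodule (A i).mulVecLin := by
  have hTstar' (Y : Matrix n n ℂ) : Tstar Y = ∑ i, (A i)ᴴ * Y * (A i)ᴴᴴ := by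
    simpa only [conjTranspose_conjTranspose] using hTstar Y
  rw [leavesInv_iff_forall_mul_eq hTstar' hW]
  refine forall_congr' fun i => ?_
  rw [ker_mem_invtSubmodule_iff hW.2, ← conjTranspose_inj]
  simp only [conjTranspose_mul, conjTranspose_conjTranspose, hW.1.eq, Matrix.mul_assoc]

omit [DecidableEq n] in
theorem isCompl_ker_range_of_rank_eq {W V : Matrix n n ℂ} (hrank : W.rank = V.rank)
    (h : LinearMap.ker W.mulVecLin ⊓ LinearMap.range V.mulVecLin = ⊥) :
    IsCompl (LinearMap.ker W.mulVecLin) (LinearMap.range V.mulVecLin) := by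
  refine (Submodule.isCompl_iff_disjoint _ _ ?_).mpr (disjoint_iff.mpr h)
  have := LinearMap.finrank_range_add_finrank_ker W.mulVecLin
  unfold Matrix.rank at hrank
  omega

theorem isIrredOn_adjoint (hT : ∀ X, T X = ∑ i, A i * X * (A i)ᴴ)
    (hTstar : ∀ Y, Tstar Y = ∑ i, (A i)ᴴ * Y * A i) {V W : Matrix n n ℂ} (hV : IsOrthProj V)
    (hVinv : LeavesInv T V) (hirr : IsIrredOn T V) (hW : IsOrthProj W)
    (hcompl : IsCompl (LinearMap.ker W.mulVecLin) (LinearMap.range V.mulVecLin)) :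
    IsIrredOn Tstar W := by
  intro W' hW' hle hW'inv
  have hker : LinearMap.ker W.mulVecLin ≤ LinearMap.ker W'.mulVecLin :=
    hW.ker_le_ker_of_range_le hW' hle
  have hW'A := (leavesInv_adjoint_iff_ker_mem_invtSubmodule hTstar hW').mp hW'inv
  have hVA := (leavesInv_iff_range_mem_invtSubmodule hT hV).mp hVinv
  obtain ⟨P, hP, hPrange⟩ :=
    exists_isOrthProj_range_eq (LinearMap.ker W'.mulVecLin ⊓ LinearMap.range V.mulVecLin)
  have hPinv : LeavesInv T P := (leavesInv_iff_range_mem_invtSubmodule hT hP).mpr fun i =>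
    hPrange ▸ Sublattice.inf_mem (hW'A i) (hVA i)
  rcases hirr P hP (hPrange ▸ inf_le_right) hPinv with hPV | hP0
  · right
    have hrange : LinearMap.range V.mulVecLin ≤ LinearMap.ker W'.mulVecLin := by
      rw [← hPV, hPrange]
      exact inf_le_left
    have htop : LinearMap.ker W'.mulVecLin = ⊤ :=
      top_unique (hcompl.sup_eq_top ▸ sup_le hker hrange)
    rw [ext_iff_mulVec]
    intro x
    simpa using htop.ge (Submodule.mem_top (x := x))
  · left
    have hdisj : Disjoint (LinearMap.ker W'.mulVecLin) (LinearMap.range V.mulVecLin) := by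
      rw [disjoint_iff, ← hPrange, hP0, mulVecLin_zero, LinearMap.range_zero]
    refine hW'.eq_of_ker_eq hW (Submodule.eq_of_le_of_finrank_le hker ?_).symm
    have := Submodule.finrank_add_finrank_le_of_disjoint hdisj
    rw [← Submodule.finrank_add_eq_of_isCompl hcompl] at this
    omega

end Kraus

section Blocks

variable {m p : Type*} [Fintype m] [Fintype p] [DecidableEq m] [DecidableEq p]

omit [DecidableEq p] in
theorem fromBlocks_one_zero_mulVec (x : m ⊕ p → ℂ) :
    (fromBlocks 1 0 0 0 : Matrix (m ⊕ p) (m ⊕ p) ℂ) *ᵥ x = Sum.elim (x ∘ Sum.inl) 0 := by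
  simp [fromBlocks_mulVec]

theorem isOrthProj_fromBlocks_one_zero :
    IsOrthProj (fromBlocks 1 0 0 0 : Matrix (m ⊕ p) (m ⊕ p) ℂ) :=
  ⟨by simp [IsHermitian, fromBlocks_conjTranspose], by simp [fromBlocks_multiply]⟩

theorem rank_fromBlocks_one_zero :
    (fromBlocks 1 0 0 0 : Matrix (m ⊕ p) (m ⊕ p) ℂ).rank = Fintype.card m := by
  rw [← diagonal_one, ← diagonal_zero, fromBlocks_diagonal, rank_diagonal]
  simp [Fintype.card_subtype, Finset.card_filter, Fintype.sum_sum_type]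

omit [DecidableEq p] in
theorem mem_range_fromBlocks_one_zero_iff (x : m ⊕ p → ℂ) :
    x ∈ LinearMap.range (fromBlocks 1 0 0 0 : Matrix (m ⊕ p) (m ⊕ p) ℂ).mulVecLin ↔
      ∀ b, x (Sum.inr b) = 0 := by
  simp only [LinearMap.mem_range, mulVecLin_apply, fromBlocks_one_zero_mulVec]
  refine ⟨?_, fun hx => ⟨x, ?_⟩⟩
  · rintro ⟨y, rfl⟩ b
    rfl
  · ext (a | b)
    · rfl
    · exact (hx b).symm

end Blocks

section Stacked

variable {s t : ℕ}

/-- `[-Sᴴ; Id]`: its columns span the orthogonal complement of the columns of `stacked S`. -/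
def stackedCompl (S : Matrix (Fin t) (Fin s) ℂ) : Matrix (Fin s ⊕ Fin t) (Fin t) ℂ :=
  fromRows (-Sᴴ) 1

theorem stacked_eq_fromRows (S : Matrix (Fin t) (Fin s) ℂ) : stacked S = fromRows 1 S := by
  ext (a | b) j
  · simp [stacked, one_apply]
  · rfl

theorem finrank_range_stacked (S : Matrix (Fin t) (Fin s) ℂ) :
    Module.finrank ℂ (LinearMap.range (stacked S).mulVecLin) = s := by
  have hinj : Function.Injective (stacked S).mulVecLin := fun x y hxy => by
    funext a
    simpa [stacked_eq_fromRows] using congrFun hxy (Sum.inl a)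
  rw [LinearMap.finrank_range_of_inj hinj, Module.finrank_fin_fun]

theorem ker_conjTranspose_stacked (S : Matrix (Fin t) (Fin s) ℂ) :
    LinearMap.ker (stacked S)ᴴ.mulVecLin = LinearMap.range (stackedCompl S).mulVecLin := by
  ext x
  simp only [LinearMap.mem_ker, LinearMap.mem_range, mulVecLin_apply, stacked_eq_fromRows,
    stackedCompl, conjTranspose_fromRows_eq_fromCols_conjTranspose, conjTranspose_one,
    fromCols_mulVec, fromRows_mulVec, one_mulVec, neg_mulVec]
  refine ⟨fun hx => ⟨x ∘ Sum.inr, ?_⟩, ?_⟩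
  · ext (a | b)
    · simpa [neg_eq_iff_add_eq_zero, add_comm] using congrFun hx a
    · rfl
  · rintro ⟨y, rfl⟩
    simp

theorem fFun_eq_sum_trace {ι : Type*} [Fintype ι]
    {A : ι → Matrix (Fin s ⊕ Fin t) (Fin s ⊕ Fin t) ℂ}
    {Tstar : Matrix (Fin s ⊕ Fin t) (Fin s ⊕ Fin t) ℂ → Matrix (Fin s ⊕ Fin t) (Fin s ⊕ Fin t) ℂ}
    (hTstar : ∀ Y, Tstar Y = ∑ i, (A i)ᴴ * Y * A i) (S : Matrix (Fin t) (Fin s) ℂ) :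
    fFun Tstar S = ∑ i, ((stacked S)ᴴ * A i * stackedCompl S *
      ((stacked S)ᴴ * A i * stackedCompl S)ᴴ).trace := by
  have hM : fromBlocks 1 Sᴴ S (S * Sᴴ) = stacked S * (stacked S)ᴴ := by
    simp [stacked_eq_fromRows, conjTranspose_fromRows_eq_fromCols_conjTranspose]
  have hU : fromBlocks (Sᴴ * S) (-Sᴴ) (-S) 1 = stackedCompl S * (stackedCompl S)ᴴ := by
    simp [stackedCompl, conjTranspose_fromRows_eq_fromCols_conjTranspose]
  rw [fFun, hM, hU, hTstar, Finset.sum_mul, trace_sum]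
  refine Finset.sum_congr rfl fun i _ => ?_
  simp only [conjTranspose_mul, conjTranspose_conjTranspose, Matrix.mul_assoc]
  rw [← Matrix.mul_assoc (A i)ᴴ, trace_mul_comm]
  simp only [Matrix.mul_assoc]

theorem fFun_eq_zero_iff {ι : Type*} [Fintype ι]
    {A : ι → Matrix (Fin s ⊕ Fin t) (Fin s ⊕ Fin t) ℂ}
    {Tstar : Matrix (Fin s ⊕ Fin t) (Fin s ⊕ Fin t) ℂ → Matrix (Fin s ⊕ Fin t) (Fin s ⊕ Fin t) ℂ}
    (hTstar : ∀ Y, Tstar Y = ∑ i, (A i)ᴴ * Y * A i) (S : Matrix (Fin t) (Fin s) ℂ) :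
    fFun Tstar S = 0 ↔
      ∀ i, LinearMap.ker (stacked S)ᴴ.mulVecLin ∈ Module.End.invtSubmodule (A i).mulVecLin := by
  simp only [fFun_eq_sum_trace hTstar, sum_trace_mul_conjTranspose_self_eq_zero_iff,
    ker_mem_invtSubmodule_iff_mul_eq_zero (ker_conjTranspose_stacked S)]

theorem exists_stacked_range_eq_of_finrank_eq (G : Submodule ℂ (Fin s ⊕ Fin t → ℂ))
    (hdim : Module.finrank ℂ G = s) (hG : ∀ x ∈ G, (∀ a, x (Sum.inl a) = 0) → x = 0) :
    ∃ S : Matrix (Fin t) (Fin s) ℂ, LinearMap.range (stacked S).mulVecLin = G := by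
  -- `G` is the graph of a linear map `(Fin s → ℂ) → (Fin t → ℂ)`, and `S` is its matrix
  let π : G →ₗ[ℂ] Fin s → ℂ := LinearMap.funLeft ℂ ℂ Sum.inl ∘ₗ G.subtype
  have hπ : Function.Injective π := by
    refine (injective_iff_map_eq_zero π).mpr fun g hg => Subtype.ext (hG g g.2 fun a => ?_)
    exact congrFun hg a
  let e := LinearMap.linearEquivOfInjective π hπ (by rw [hdim, Module.finrank_fin_fun])
  let S :=
    LinearMap.toMatrix' (LinearMap.funLeft ℂ ℂ Sum.inr ∘ₗ G.subtype ∘ₗ e.symm.toLinearMap)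
  have hS (y : Fin s → ℂ) : stacked S *ᵥ y = e.symm y := by
    rw [stacked_eq_fromRows, fromRows_mulVec, one_mulVec, LinearMap.toMatrix'_mulVec]
    ext (a | b)
    · exact (congrFun (e.apply_symm_apply y) a).symm
    · rfl
  refine ⟨S, Submodule.eq_of_le_of_finrank_le ?_ (by rw [hdim, finrank_range_stacked])⟩
  rintro _ ⟨y, rfl⟩
  rw [mulVecLin_apply, hS]
  exact (e.symm y).2

end Stacked

section Solutions

variable {s t : ℕ} {W : Matrix (Fin s ⊕ Fin t) (Fin s ⊕ Fin t) ℂ}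

theorem ker_inf_range_fromBlocks_one_zero_eq_bot (hW : IsOrthProj W)
    {S : Matrix (Fin t) (Fin s) ℂ}
    (hS : LinearMap.range W.mulVecLin = LinearMap.range (stacked S).mulVecLin) :
    LinearMap.ker W.mulVecLin ⊓
      LinearMap.range (fromBlocks 1 0 0 0 : Matrix (Fin s ⊕ Fin t) (Fin s ⊕ Fin t) ℂ).mulVecLin
      = ⊥ := by
  rw [hW.ker_eq_ker_conjTranspose hS, ker_conjTranspose_stacked, Submodule.eq_bot_iff]
  rintro _ ⟨⟨y, rfl⟩, hy⟩
  have hy0 : y = 0 := funext fun b => by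
    simpa [stackedCompl] using (mem_range_fromBlocks_one_zero_iff _).mp hy b
  rw [hy0, map_zero]

theorem exists_range_eq_stacked_of_isCompl (hW : IsOrthProj W) (hrank : W.rank = s)
    (hcompl : IsCompl (LinearMap.ker W.mulVecLin)
      (LinearMap.range
        (fromBlocks 1 0 0 0 : Matrix (Fin s ⊕ Fin t) (Fin s ⊕ Fin t) ℂ).mulVecLin)) :
    ∃ S : Matrix (Fin t) (Fin s) ℂ,
      LinearMap.range W.mulVecLin = LinearMap.range (stacked S).mulVecLin := by
  have hgraph : ∀ x ∈ LinearMap.range W.mulVecLin, (∀ a, x (Sum.inl a) = 0) → x = 0 := by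
    intro x hx hx0
    -- `x` is orthogonal both to `ker W` and to the range of `V₁`, which together span everything
    obtain ⟨u, hu, v, hv, huv⟩ :=
      Submodule.mem_sup.mp (hcompl.sup_eq_top ▸ Submodule.mem_top : x ∈ _ ⊔ _)
    have hxv : star x ⬝ᵥ v = 0 := by
      simp [dotProduct, Fintype.sum_sum_type, hx0, (mem_range_fromBlocks_one_zero_iff v).mp hv]
    rw [← dotProduct_star_self_eq_zero]
    nth_rw 2 [← huv]
    rw [dotProduct_add, (hW.mem_ker_iff u).mp hu _ hx, hxv, add_zero]
  obtain ⟨S, hS⟩ := exists_stacked_range_eq_of_finrank_eq _ hrank hgraph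
  exact ⟨S, hS.symm⟩

end Solutions

theorem stmt9_general {s t : ℕ}
    (T1 T1star : Matrix (Fin s ⊕ Fin t) (Fin s ⊕ Fin t) ℂ →
      Matrix (Fin s ⊕ Fin t) (Fin s ⊕ Fin t) ℂ)
    (hCP : IsCPMap T1)
    (hadj : ∀ X Y : Matrix (Fin s ⊕ Fin t) (Fin s ⊕ Fin t) ℂ,
      (T1 X * Yᴴ).trace = (X * (T1star Y)ᴴ).trace)
    (hinv : LeavesInv T1 (Matrix.fromBlocks 1 0 0 0))
    (hirr : IsIrredOn T1 (Matrix.fromBlocks 1 0 0 0))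
    (W : Matrix (Fin s ⊕ Fin t) (Fin s ⊕ Fin t) ℂ) :
    IsSolutionW T1star (Matrix.fromBlocks 1 0 0 0) W ↔
      IsOrthProj W ∧ ∃ S : Matrix (Fin t) (Fin s) ℂ, fFun T1star S = 0 ∧
        LinearMap.range W.mulVecLin = LinearMap.range (stacked S).mulVecLin := by
  obtain ⟨r, A, hT⟩ := hCP
  have hTstar := kraus_adjoint_eq hT hadj
  have hrankV : (fromBlocks 1 0 0 0 : Matrix (Fin s ⊕ Fin t) (Fin s ⊕ Fin t) ℂ).rank = s := by
    rw [rank_fromBlocks_one_zero, Fintype.card_fin]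
  constructor
  · rintro ⟨hW, hWinv, -, hrank, hker⟩
    obtain ⟨S, hS⟩ := exists_range_eq_stacked_of_isCompl hW (hrank.trans hrankV)
      (isCompl_ker_range_of_rank_eq hrank hker)
    refine ⟨hW, S, (fFun_eq_zero_iff hTstar S).mpr ?_, hS⟩
    rw [← hW.ker_eq_ker_conjTranspose hS]
    exact (leavesInv_adjoint_iff_ker_mem_invtSubmodule hTstar hW).mp hWinv
  · rintro ⟨hW, S, hf, hS⟩
    have hWinv : LeavesInv T1star W := by
      rw [leavesInv_adjoint_iff_ker_mem_invtSubmodule hTstar hW, hW.ker_eq_ker_conjTranspose hS]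
      exact (fFun_eq_zero_iff hTstar S).mp hf
    have hrank :
        W.rank = (fromBlocks 1 0 0 0 : Matrix (Fin s ⊕ Fin t) (Fin s ⊕ Fin t) ℂ).rank := by
      rw [hrankV, Matrix.rank, hS, finrank_range_stacked]
    have hker := ker_inf_range_fromBlocks_one_zero_eq_bot hW hS
    exact ⟨hW, hWinv, isIrredOn_adjoint hT hTstar isOrthProj_fromBlocks_one_zero hinv hirr hW
      (isCompl_ker_range_of_rank_eq hrank hker), hrank, hker⟩

/-- Lemma 11: for a completely positive `T₁` with `T₁`-invariant irreducible
corner `V₁ = [[Id, 0],[0, 0]]` and `V₁ T₁^*(V₁) V₁ = V₁`, `W` solves Problem 1 for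
`(T₁, V₁)` iff `W` is the orthogonal projection onto the column space of
`[Id; S]` for some zero `S` of `f`. -/
theorem stmt9 {s t : ℕ}
    (T1 T1star : Matrix (Fin s ⊕ Fin t) (Fin s ⊕ Fin t) ℂ →
      Matrix (Fin s ⊕ Fin t) (Fin s ⊕ Fin t) ℂ)
    (hCP : IsCPMap T1)
    (hadj : ∀ X Y : Matrix (Fin s ⊕ Fin t) (Fin s ⊕ Fin t) ℂ,
      (T1 X * Yᴴ).trace = (X * (T1star Y)ᴴ).trace)
    (hinv : LeavesInv T1 (Matrix.fromBlocks 1 0 0 0))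
    (hirr : IsIrredOn T1 (Matrix.fromBlocks 1 0 0 0))
    (hfix : (Matrix.fromBlocks 1 0 0 0 : Matrix (Fin s ⊕ Fin t) (Fin s ⊕ Fin t) ℂ) *
        T1star (Matrix.fromBlocks 1 0 0 0) * Matrix.fromBlocks 1 0 0 0 =
        Matrix.fromBlocks 1 0 0 0)
    (W : Matrix (Fin s ⊕ Fin t) (Fin s ⊕ Fin t) ℂ) :
    IsSolutionW T1star (Matrix.fromBlocks 1 0 0 0) W ↔
      IsOrthProj W ∧ ∃ S : Matrix (Fin t) (Fin s) ℂ, fFun T1star S = 0 ∧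
        LinearMap.range W.mulVecLin = LinearMap.range (stacked S).mulVecLin :=
  stmt9_general T1 T1star hCP hadj hinv hirr W

end
end

section
/- Let T_1 : M_k(ℂ) → M_k(ℂ) be a completely positive map and let V_1 be the block-diagonal orthogonal projection with blocks Id_{s×s} and 0_{(k−s)×(k−s)}, such that T_1(V_1M_kV_1) ⊆ V_1M_kV_1 and V_1 T_1*(V_1) V_1 = V_1. If S ∈ M_{(k−s)×s}(ℂ) satisfies f(S) = 0, where f(X) = tr( T_1*([[Id, X*],[X, XX*]]) · [[X*X, −X*],[−X, Id]] ) (2×2 block matrices with blocks of sizes s and k−s), then the positive semidefinite matrix [[Id, S*],[S, SS*]] is a fixed point of T_1*: T_1*([[Id, S*],[S, SS*]]) = [[Id, S*],[S, SS*]]. -/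
open scoped Kronecker ComplexOrder
open Matrix

noncomputable section

/-!
The adjoint of a Kraus map `X ↦ ∑ Kᵢ X Kᵢᴴ` is `Y ↦ ∑ Kᵢᴴ Y Kᵢ`, so `A = T₁^*(P)` is positive
semidefinite for `P = [[1, S^*], [S, SS^*]]`. Since `Q = [[S^*S, -S^*], [-S, 1]]` is positive
semidefinite too, `tr(AQ) = f(S) = 0` forces `AQ = 0`. As `T₁` preserves the corner of `V₁`,
`V₁ T₁^*(Y) V₁` depends only on `V₁ Y V₁`; with `V₁ P V₁ = V₁` this gives `V₁ A V₁ = V₁`.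
A Hermitian matrix with upper left block `1` that annihilates `Q` is exactly `P`.
-/

def IsTraceAdjoint {n : Type*} [Fintype n] (T Tstar : Matrix n n ℂ → Matrix n n ℂ) : Prop :=
  ∀ X Y, (T X * Yᴴ).trace = (X * (Tstar Y)ᴴ).trace

namespace Matrix

variable {n : Type*} [Fintype n]

theorem eq_of_forall_trace_mul_conjTranspose {R : Type*} [Semiring R] [StarRing R]
    {B C : Matrix n n R} (h : ∀ X, (X * Bᴴ).trace = (X * Cᴴ).trace) : B = C :=
  conjTranspose_inj.mp (ext_iff_trace_mul_left.mpr h)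

open scoped MatrixOrder in
theorem PosSemidef.mul_eq_zero_of_trace_mul_eq_zero {𝕜 : Type*} [RCLike 𝕜]
    {A B : Matrix n n 𝕜} (hA : A.PosSemidef) (hB : B.PosSemidef) (h : (A * B).trace = 0) :
    A * B = 0 := by
  classical
  obtain ⟨X, rfl⟩ := CStarAlgebra.nonneg_iff_eq_star_mul_self.mp hA.nonneg
  obtain ⟨Y, rfl⟩ := CStarAlgebra.nonneg_iff_eq_star_mul_self.mp hB.nonneg
  rw [star_eq_conjTranspose, star_eq_conjTranspose] at h ⊢
  have hXY : X * Yᴴ = 0 := by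
    refine trace_conjTranspose_mul_self_eq_zero_iff.mp ?_
    calc ((X * Yᴴ)ᴴ * (X * Yᴴ)).trace = (Y * (Xᴴ * X * Yᴴ)).trace := by
          simp only [conjTranspose_mul, conjTranspose_conjTranspose, Matrix.mul_assoc]
      _ = (Xᴴ * X * (Yᴴ * Y)).trace := by rw [trace_mul_comm]; simp only [Matrix.mul_assoc]
      _ = 0 := h
  calc Xᴴ * X * (Yᴴ * Y) = Xᴴ * (X * Yᴴ) * Y := by simp only [Matrix.mul_assoc]
    _ = 0 := by rw [hXY, Matrix.mul_zero, Matrix.zero_mul]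

end Matrix

section Kraus

variable {n : Type*} [Fintype n] {T Tstar : Matrix n n ℂ → Matrix n n ℂ}

theorem IsTraceAdjoint.eq_sum_of_kraus (hadj : IsTraceAdjoint T Tstar) {r : ℕ}
    {K : Fin r → Matrix n n ℂ} (hK : ∀ X, T X = ∑ i, K i * X * (K i)ᴴ) (Y : Matrix n n ℂ) :
    Tstar Y = ∑ i, (K i)ᴴ * Y * K i := by
  refine Matrix.eq_of_forall_trace_mul_conjTranspose fun X => ?_
  rw [← hadj, hK, Matrix.conjTranspose_sum, Finset.sum_mul, Finset.mul_sum, Matrix.trace_sum,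
    Matrix.trace_sum]
  refine Finset.sum_congr rfl fun i _ => ?_
  calc (K i * X * (K i)ᴴ * Yᴴ).trace = (X * ((K i)ᴴ * Yᴴ) * K i).trace := by
        simp only [Matrix.mul_assoc]
        rw [Matrix.trace_mul_comm (K i)]
        simp only [Matrix.mul_assoc]
    _ = (X * ((K i)ᴴ * Y * K i)ᴴ).trace := by
        simp only [Matrix.conjTranspose_mul, Matrix.conjTranspose_conjTranspose, Matrix.mul_assoc]

theorem IsCPMap.posSemidef_adjoint (hT : IsCPMap T) (hadj : IsTraceAdjoint T Tstar)
    {Y : Matrix n n ℂ} (hY : Y.PosSemidef) : (Tstar Y).PosSemidef := by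
  obtain ⟨r, K, hK⟩ := hT
  rw [hadj.eq_sum_of_kraus hK]
  exact Matrix.posSemidef_sum _ fun i _ => hY.conjTranspose_mul_mul_same (K i)

theorem LeavesInv.compress_adjoint (hadj : IsTraceAdjoint T Tstar) {V : Matrix n n ℂ}
    (hV : Vᴴ = V) (hinv : LeavesInv T V) (Y : Matrix n n ℂ) :
    V * Tstar Y * V = V * Tstar (V * Y * V) * V := by
  have compress : ∀ X M : Matrix n n ℂ, (X * (V * M * V)ᴴ).trace = (V * X * V * Mᴴ).trace :=
    fun X M => by
      rw [Matrix.conjTranspose_mul, Matrix.conjTranspose_mul, hV]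
      simp only [Matrix.mul_assoc]; rw [Matrix.trace_mul_comm V]; simp only [Matrix.mul_assoc]
  refine Matrix.eq_of_forall_trace_mul_conjTranspose fun X => ?_
  calc (X * (V * Tstar Y * V)ᴴ).trace = (T (V * X * V) * Yᴴ).trace := by rw [compress, hadj]
    _ = (V * T (V * X * V) * V * Yᴴ).trace := by rw [← hinv]
    _ = (T (V * X * V) * (V * Y * V)ᴴ).trace := (compress _ _).symm
    _ = (X * (V * Tstar (V * Y * V) * V)ᴴ).trace := by rw [hadj, compress]

end Kraus

namespace Matrix

variable {m n R : Type*} [Fintype m] [Fintype n]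

theorem fromBlocks_one_zero_mul_mul_fromBlocks_one_zero [DecidableEq m] [Ring R]
    (a : Matrix m m R) (b : Matrix m n R) (c : Matrix n m R) (d : Matrix n n R) :
    fromBlocks 1 0 0 0 * fromBlocks a b c d * fromBlocks 1 0 0 0 =
      (fromBlocks a 0 0 0 : Matrix (m ⊕ n) (m ⊕ n) R) := by
  simp [fromBlocks_multiply]

theorem posSemidef_fromBlocks_one_conjTranspose [DecidableEq m] {𝕜 : Type*} [RCLike 𝕜]
    (S : Matrix n m 𝕜) : (fromBlocks 1 Sᴴ S (S * Sᴴ)).PosSemidef := by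
  have h : fromBlocks 1 Sᴴ S (S * Sᴴ) = (fromCols 1 Sᴴ)ᴴ * fromCols 1 Sᴴ := by
    simp [conjTranspose_fromCols_eq_fromRows_conjTranspose]
  exact h ▸ posSemidef_conjTranspose_mul_self _

theorem posSemidef_fromBlocks_conjTranspose_mul_self_neg [DecidableEq n] {𝕜 : Type*} [RCLike 𝕜]
    (S : Matrix n m 𝕜) : (fromBlocks (Sᴴ * S) (-Sᴴ) (-S) 1).PosSemidef := by
  have h : fromBlocks (Sᴴ * S) (-Sᴴ) (-S) 1 = (fromCols (-S) 1)ᴴ * fromCols (-S) 1 := by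
    simp [conjTranspose_fromCols_eq_fromRows_conjTranspose]
  exact h ▸ posSemidef_conjTranspose_mul_self _

theorem eq_fromBlocks_of_mul_fromBlocks_eq_zero [DecidableEq m] [DecidableEq n] [Ring R]
    [StarRing R] {A : Matrix (m ⊕ n) (m ⊕ n) R} {S : Matrix n m R} (hA : A.IsHermitian)
    (hcorner : fromBlocks 1 0 0 0 * A * fromBlocks 1 0 0 0 = fromBlocks 1 0 0 0)
    (hker : A * fromBlocks (Sᴴ * S) (-Sᴴ) (-S) 1 = 0) :
    A = fromBlocks 1 Sᴴ S (S * Sᴴ) := by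
  obtain ⟨a, b, c, d, rfl⟩ : ∃ a b c d, A = fromBlocks a b c d :=
    ⟨_, _, _, _, (fromBlocks_toBlocks A).symm⟩
  rw [fromBlocks_one_zero_mul_mul_fromBlocks_one_zero] at hcorner
  obtain ⟨rfl, -⟩ := fromBlocks_inj.mp hcorner
  rw [IsHermitian, fromBlocks_conjTranspose, fromBlocks_inj] at hA
  rw [fromBlocks_multiply, ← fromBlocks_zero, fromBlocks_inj] at hker
  obtain ⟨-, hb, -, hd⟩ := hker
  have hb' : b = Sᴴ := by simpa [neg_add_eq_zero, eq_comm] using hb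
  have hc : c = S := by rw [← hA.2.2.1, hb', conjTranspose_conjTranspose]
  have hd' : d = S * Sᴴ := by simpa [hc, neg_add_eq_zero, eq_comm] using hd
  rw [hb', hc, hd']

end Matrix

/-- Part of the proof of Lemma 11, step (b) ⟹ (a): if `T₁` is completely positive,
leaves the corner of `V₁ = [[Id, 0],[0, 0]]` invariant, `V₁ T₁^*(V₁) V₁ = V₁`,
and `f(S) = 0`, then `[[Id, S^*],[S, SS^*]]` is a fixed point of `T₁^*`. -/
theorem stmt11 {s t : ℕ}
    (T1 T1star : Matrix (Fin s ⊕ Fin t) (Fin s ⊕ Fin t) ℂ →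
      Matrix (Fin s ⊕ Fin t) (Fin s ⊕ Fin t) ℂ)
    (hCP : IsCPMap T1)
    (hadj : ∀ X Y : Matrix (Fin s ⊕ Fin t) (Fin s ⊕ Fin t) ℂ,
      (T1 X * Yᴴ).trace = (X * (T1star Y)ᴴ).trace)
    (hinv : LeavesInv T1 (Matrix.fromBlocks 1 0 0 0))
    (hfix : (Matrix.fromBlocks 1 0 0 0 : Matrix (Fin s ⊕ Fin t) (Fin s ⊕ Fin t) ℂ) *
        T1star (Matrix.fromBlocks 1 0 0 0) * Matrix.fromBlocks 1 0 0 0 =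
        Matrix.fromBlocks 1 0 0 0)
    (S : Matrix (Fin t) (Fin s) ℂ) (hS : fFun T1star S = 0) :
    T1star (Matrix.fromBlocks 1 Sᴴ S (S * Sᴴ)) = Matrix.fromBlocks 1 Sᴴ S (S * Sᴴ) := by
  have hV : (fromBlocks 1 0 0 0 : Matrix (Fin s ⊕ Fin t) (Fin s ⊕ Fin t) ℂ)ᴴ =
      fromBlocks 1 0 0 0 := by
    simp [fromBlocks_conjTranspose]
  have hA := hCP.posSemidef_adjoint hadj (posSemidef_fromBlocks_one_conjTranspose S)
  refine eq_fromBlocks_of_mul_fromBlocks_eq_zero hA.isHermitian ?_ ?_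
  · rw [hinv.compress_adjoint hadj hV, fromBlocks_one_zero_mul_mul_fromBlocks_one_zero, hfix]
  · exact hA.mul_eq_zero_of_trace_mul_eq_zero
      (posSemidef_fromBlocks_conjTranspose_mul_self_neg S) hS

end
end
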